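/- arXiv:2604.02750 — 3 statements merged into one kernel-verified Lean document; each statement's English description precedes it below -/
import Mathlib

section
/- Let X be a metric space, m a Borel probability measure on X, f: X → X measurable, and ν a σ-finite infinite Borel measure on X that is f-invariant, ergodic, conservative, and absolutely continuous with respect to m. Suppose there exists p ∈ X such that ν(X \ O) < ∞ for every open neighborhood O of p. Then the set of points x ∈ X such that (1/n)∑_{i=0}^{n-1} φ(f^i(x)) → φ(p) for every bounded continuous φ: X → ℝ has positive m-measure. -/
/-!
Fix a set `A` of finite `ν`-measure and `ε > 0`. Hopf's maximal ergodic lemma, applied to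
`1_A - ε 1_B` for sets `B` of finite measure exhausting the space, shows that the points at which
some Birkhoff average of `1_A` exceeds `ε` have measure at most `ν A / ε`. The points at which the
upper density of visits to `A` exceeds `ε` form a strictly invariant subset of them, hence of
finite measure; since `ν` is infinite and ergodic, this set is null. Taking for `A` the
complements of the balls about `p`, `ν`-almost every orbit spends asymptotically all of its time
near `p`, so its Cesàro averages of a bounded continuous `φ` tend to `φ p`. The set of such points
is `ν`-conull, hence of infinite `ν`-measure, hence of positive `m`-measure as `ν ≪ m`.
-/

open MeasureTheory Filter Set Topology
open scoped ENNReal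

lemma ENNReal.limsup_ofReal_le_of_tendsto_sub {ι : Type*} {l : Filter ι} {u v : ι → ℝ}
    (h : Tendsto (u - v) l (𝓝 0)) :
    limsup (fun i => ENNReal.ofReal (u i)) l ≤ limsup (fun i => ENNReal.ofReal (v i)) l := by
  have h' : Tendsto (fun i => ENNReal.ofReal (u i - v i)) l (𝓝 0) := by
    have := (ENNReal.continuous_ofReal.tendsto 0).comp h
    rwa [ENNReal.ofReal_zero] at this
  calc limsup (fun i => ENNReal.ofReal (u i)) l
      ≤ limsup ((fun i => ENNReal.ofReal (v i)) + fun i => ENNReal.ofReal (u i - v i)) l :=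
        limsup_le_limsup (.of_forall fun i => by
          simpa using ENNReal.ofReal_add_le (p := v i) (q := u i - v i))
    _ = limsup (fun i => ENNReal.ofReal (v i)) l := ENNReal.limsup_add_of_right_tendsto_zero h' _

lemma ENNReal.limsup_ofReal_eq_of_tendsto_sub {ι : Type*} {l : Filter ι} {u v : ι → ℝ}
    (h : Tendsto (u - v) l (𝓝 0)) :
    limsup (fun i => ENNReal.ofReal (u i)) l = limsup (fun i => ENNReal.ofReal (v i)) l :=
  le_antisymm (limsup_ofReal_le_of_tendsto_sub h)
    (limsup_ofReal_le_of_tendsto_sub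
      (by simpa using h.neg : Tendsto (fun i => v i - u i) l (𝓝 0)))

lemma tendsto_zero_of_limsup_ofReal_le {ι : Type*} {l : Filter ι} {u : ι → ℝ}
    (h0 : ∀ i, 0 ≤ u i)
    (h : ∀ ε > 0, limsup (fun i => ENNReal.ofReal (u i)) l ≤ ENNReal.ofReal ε) :
    Tendsto u l (𝓝 0) := by
  refine tendsto_order.2 ⟨fun a ha => .of_forall fun i => ha.trans_le (h0 i), fun a ha => ?_⟩
  have hlt : limsup (fun i => ENNReal.ofReal (u i)) l < ENNReal.ofReal a :=
    (h (a / 2) (half_pos ha)).trans_lt ((ENNReal.ofReal_lt_ofReal_iff ha).2 (half_lt_self ha))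
  exact (eventually_lt_of_limsup_lt hlt).mono fun i hi => (ENNReal.ofReal_lt_ofReal_iff ha).1 hi

section Birkhoff

variable {α : Type*}

noncomputable def birkhoffMax (f : α → α) (g : α → ℝ) : ℕ → α → ℝ
  | 0, _ => 0
  | n + 1, x => max (birkhoffMax f g n x) (birkhoffSum f g (n + 1) x)

variable (f : α → α) (g : α → ℝ)

lemma birkhoffMax_nonneg (n : ℕ) (x : α) : 0 ≤ birkhoffMax f g n x := by
  induction n with
  | zero => exact le_rfl
  | succ n ih => exact ih.trans (le_max_left _ _)

lemma birkhoffMax_le_succ (n : ℕ) (x : α) : birkhoffMax f g n x ≤ birkhoffMax f g (n + 1) x :=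
  le_max_left _ _

lemma monotone_birkhoffMax (x : α) : Monotone (birkhoffMax f g · x) :=
  monotone_nat_of_le_succ fun n => birkhoffMax_le_succ f g n x

lemma birkhoffSum_le_birkhoffMax (n : ℕ) (x : α) : birkhoffSum f g n x ≤ birkhoffMax f g n x := by
  cases n with
  | zero => simp [birkhoffMax]
  | succ n => exact le_max_right _ _

lemma birkhoffMax_le_add_birkhoffMax_apply {n : ℕ} {x : α} (hx : 0 < birkhoffMax f g n x) :
    birkhoffMax f g n x ≤ g x + birkhoffMax f g n (f x) := by
  induction n with
  | zero => exact absurd hx (lt_irrefl 0)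
  | succ n ih =>
    rcases le_total (birkhoffMax f g n x) (birkhoffSum f g (n + 1) x) with h | h
    · rw [birkhoffMax, max_eq_right h, birkhoffSum_succ']
      linarith [birkhoffSum_le_birkhoffMax f g n (f x), birkhoffMax_le_succ f g n (f x)]
    · rw [birkhoffMax, max_eq_left h] at hx ⊢
      linarith [ih hx, birkhoffMax_le_succ f g n (f x)]

lemma birkhoffSum_indicator_one_nonneg (A : Set α) (n : ℕ) (x : α) :
    0 ≤ birkhoffSum f (A.indicator (1 : α → ℝ)) n x :=
  Finset.sum_nonneg fun _ _ => indicator_nonneg (fun _ _ => zero_le_one) _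

lemma birkhoffSum_indicator_one_le (A : Set α) (n : ℕ) (x : α) :
    birkhoffSum f (A.indicator (1 : α → ℝ)) n x ≤ n := by
  calc birkhoffSum f (A.indicator 1) n x ≤ ∑ _i ∈ Finset.range n, (1 : ℝ) :=
        Finset.sum_le_sum fun i _ => indicator_le_self' (fun _ _ => zero_le_one) (f^[i] x)
    _ = n := by simp

variable {f g}

lemma birkhoffMax_indicator_sub_pos {A B : Set α} {ε : ℝ} (hε : 0 ≤ ε) {n : ℕ} {x : α}
    (hx : ε * n < birkhoffSum f (A.indicator 1) n x) :
    0 < birkhoffMax f (fun y => A.indicator 1 y - ε * B.indicator 1 y) n x := by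
  refine lt_of_lt_of_le ?_ (birkhoffSum_le_birkhoffMax _ _ n x)
  have hsplit : birkhoffSum f (fun y => A.indicator 1 y - ε * B.indicator 1 y) n x =
      birkhoffSum f (A.indicator 1) n x - ε * birkhoffSum f (B.indicator 1) n x := by
    simp only [birkhoffSum, Finset.sum_sub_distrib, Finset.mul_sum]
  rw [hsplit]
  linarith [mul_le_mul_of_nonneg_left (birkhoffSum_indicator_one_le f B n x) hε]

lemma birkhoffAverage_real_apply (n : ℕ) (x : α) :
    birkhoffAverage ℝ f g n x = birkhoffSum f g n x / n := by
  simp [birkhoffAverage, div_eq_inv_mul]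

lemma dist_birkhoffAverage_le {h : α → ℝ} {c δ C : ℝ} (hgh : ∀ y, dist (g y) c ≤ δ + C * h y)
    {n : ℕ} (hn : n ≠ 0) (x : α) :
    dist (birkhoffAverage ℝ f g n x) c ≤ δ + C * birkhoffAverage ℝ f h n x := by
  have hn' : (0 : ℝ) < n := by positivity
  rw [birkhoffAverage_real_apply, birkhoffAverage_real_apply, Real.dist_eq]
  calc |birkhoffSum f g n x / n - c| = |∑ i ∈ Finset.range n, (g (f^[i] x) - c)| / n := by
        rw [Finset.sum_sub_distrib, Finset.sum_const, Finset.card_range, nsmul_eq_mul,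
          ← abs_of_pos hn', ← abs_div, abs_of_pos hn', sub_div, mul_div_cancel_left₀ _ hn'.ne']
        rfl
    _ ≤ (∑ i ∈ Finset.range n, (δ + C * h (f^[i] x))) / n := by
        gcongr
        exact (Finset.abs_sum_le_sum_abs _ _).trans (Finset.sum_le_sum fun i _ => hgh _)
    _ = δ + C * (birkhoffSum f h n x / n) := by
        rw [Finset.sum_add_distrib, ← Finset.mul_sum, Finset.sum_const, Finset.card_range,
          nsmul_eq_mul, add_div, mul_div_cancel_left₀ _ hn'.ne', mul_div_assoc]
        rfl

lemma limsup_ofReal_birkhoffAverage_apply (hg : Bornology.IsBounded (range g)) (x : α) :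
    limsup (fun n => ENNReal.ofReal (birkhoffAverage ℝ f g n (f x))) atTop =
      limsup (fun n => ENNReal.ofReal (birkhoffAverage ℝ f g n x)) atTop :=
  ENNReal.limsup_ofReal_eq_of_tendsto_sub <|
    tendsto_birkhoffAverage_apply_sub_birkhoffAverage' ℝ hg f x

variable [MeasurableSpace α]

lemma Measurable.birkhoffSum (hf : Measurable f) (hg : Measurable g) (n : ℕ) :
    Measurable (birkhoffSum f g n) :=
  Finset.measurable_sum _ fun i _ => hg.comp (hf.iterate i)

lemma Measurable.birkhoffMax (hf : Measurable f) (hg : Measurable g) (n : ℕ) :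
    Measurable (birkhoffMax f g n) := by
  induction n with
  | zero => exact measurable_const
  | succ n ih => exact ih.max (hf.birkhoffSum hg (n + 1))

variable {ν : Measure α}

lemma MeasureTheory.MeasurePreserving.integrable_birkhoffSum (hf : MeasurePreserving f ν ν)
    (hg : Integrable g ν) (n : ℕ) : Integrable (birkhoffSum f g n) ν :=
  integrable_finsetSum _ fun i _ => (hf.iterate i).integrable_comp_of_integrable hg

lemma MeasureTheory.MeasurePreserving.integrable_birkhoffMax (hf : MeasurePreserving f ν ν)
    (hg : Integrable g ν) (n : ℕ) : Integrable (birkhoffMax f g n) ν := by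
  induction n with
  | zero => exact integrable_zero _ _ _
  | succ n ih => exact ih.sup (hf.integrable_birkhoffSum hg (n + 1))

/-- Hopf's maximal ergodic lemma. -/
theorem MeasureTheory.MeasurePreserving.setIntegral_birkhoffMax_pos_nonneg
    (hf : MeasurePreserving f ν ν) (hgm : Measurable g) (hg : Integrable g ν) (n : ℕ) :
    0 ≤ ∫ x in {x | 0 < birkhoffMax f g n x}, g x ∂ν := by
  set M := birkhoffMax f g n
  set E := {x | 0 < M x}
  have hE : MeasurableSet E := measurableSet_lt measurable_const (hf.measurable.birkhoffMax hgm n)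
  have hM : Integrable M ν := hf.integrable_birkhoffMax hg n
  have hMf : Integrable (M ∘ f) ν := hf.integrable_comp_of_integrable hM
  have hM_compl : ∀ x ∉ E, M x = 0 := fun x hx =>
    le_antisymm (not_lt.1 hx) (birkhoffMax_nonneg f g n x)
  have hMf_int : ∫ x, M (f x) ∂ν = ∫ x, M x ∂ν := by
    rw [← integral_map hf.measurable.aemeasurable (by rw [hf.map_eq]; exact hM.1), hf.map_eq]
  calc 0 = ∫ x in E, M x ∂ν - ∫ x, M (f x) ∂ν := by
        rw [hMf_int, setIntegral_eq_integral_of_forall_compl_eq_zero hM_compl, sub_self]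
    _ ≤ ∫ x in E, M x ∂ν - ∫ x in E, M (f x) ∂ν := by
        gcongr ?_ - ?_
        exact setIntegral_le_integral hMf (.of_forall fun x => birkhoffMax_nonneg f g n (f x))
    _ = ∫ x in E, (M x - M (f x)) ∂ν := (integral_sub hM.integrableOn hMf.integrableOn).symm
    _ ≤ ∫ x in E, g x ∂ν :=
        setIntegral_mono_on (hM.integrableOn.sub hMf.integrableOn) hg.integrableOn hE
          fun x hx => sub_le_iff_le_add.2 (birkhoffMax_le_add_birkhoffMax_apply f g hx)

lemma MeasureTheory.MeasurePreserving.ofReal_mul_measure_inter_exists_birkhoffSum_gt_le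
    (hf : MeasurePreserving f ν ν)
    {A B : Set α} (hA : MeasurableSet A) (hB : MeasurableSet B) (hBfin : ν B ≠ ∞)
    {ε : ℝ} (hε : 0 < ε) :
    ENNReal.ofReal ε * ν (B ∩ {x | ∃ n : ℕ, ε * n < birkhoffSum f (A.indicator 1) n x}) ≤
      ν A := by
  rcases eq_or_ne (ν A) ∞ with hAfin | hAfin
  · simp [hAfin]
  set h : α → ℝ := fun y => A.indicator 1 y - ε * B.indicator 1 y
  have hAint : Integrable (A.indicator (1 : α → ℝ)) ν :=
    (integrable_indicator_iff hA).2 (integrableOn_const hAfin)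
  have hBint : Integrable (B.indicator (1 : α → ℝ)) ν :=
    (integrable_indicator_iff hB).2 (integrableOn_const hBfin)
  have hhm : Measurable h :=
    (measurable_one.indicator hA).sub ((measurable_one.indicator hB).const_mul ε)
  set F : ℕ → Set α := fun N => {x | 0 < birkhoffMax f h N x}
  have hF_mono : Monotone F := fun N N' hNN' x hx =>
    hx.trans_le (monotone_birkhoffMax f h x hNN')
  have hF : ∀ N, ENNReal.ofReal ε * ν (B ∩ F N) ≤ ν A := by
    intro N
    have hF_meas : MeasurableSet (F N) :=
      measurableSet_lt measurable_const (hf.measurable.birkhoffMax hhm N)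
    have hopf := hf.setIntegral_birkhoffMax_pos_nonneg hhm (hAint.sub (hBint.const_mul ε)) N
    rw [integral_sub hAint.integrableOn (hBint.const_mul ε).integrableOn, integral_const_mul,
      integral_indicator_one hA, integral_indicator_one hB, measureReal_restrict_apply hA,
      measureReal_restrict_apply hB] at hopf
    have hBF : ε * ν.real (B ∩ F N) ≤ ν.real A :=
      (sub_nonneg.1 hopf).trans (measureReal_mono inter_subset_left hAfin)
    rw [← ofReal_measureReal (measure_ne_top_of_subset inter_subset_left hBfin),
      ← ENNReal.ofReal_mul hε.le, ← ofReal_measureReal hAfin]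
    exact ENNReal.ofReal_le_ofReal hBF
  calc ENNReal.ofReal ε * ν (B ∩ {x | ∃ n : ℕ, ε * n < birkhoffSum f (A.indicator 1) n x})
      ≤ ENNReal.ofReal ε * ν (⋃ N, B ∩ F N) := by
        gcongr
        rw [← inter_iUnion]
        exact inter_subset_inter_right B fun x ⟨n, hn⟩ =>
          mem_iUnion.2 ⟨n, birkhoffMax_indicator_sub_pos hε.le hn⟩
    _ = ⨆ N, ENNReal.ofReal ε * ν (B ∩ F N) := by
        rw [Monotone.measure_iUnion (s := fun N => B ∩ F N)
          fun N N' hNN' => inter_subset_inter_right B (hF_mono hNN'), ENNReal.mul_iSup]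
    _ ≤ ν A := iSup_le hF

theorem MeasureTheory.MeasurePreserving.ofReal_mul_measure_exists_birkhoffSum_gt_le [SigmaFinite ν]
    (hf : MeasurePreserving f ν ν) {A : Set α} (hA : MeasurableSet A) {ε : ℝ} (hε : 0 < ε) :
    ENNReal.ofReal ε * ν {x | ∃ n : ℕ, ε * n < birkhoffSum f (A.indicator 1) n x} ≤ ν A := by
  have hE : MeasurableSet {x | ∃ n : ℕ, ε * n < birkhoffSum f (A.indicator 1) n x} := by
    simp only [ofPred_exists]
    exact .iUnion fun n => measurableSet_lt measurable_const
      (hf.measurable.birkhoffSum (measurable_one.indicator hA) n)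
  rw [← Measure.iSup_restrict_spanningSets, ENNReal.mul_iSup]
  refine iSup_le fun i => ?_
  rw [Measure.restrict_apply hE, inter_comm]
  exact hf.ofReal_mul_measure_inter_exists_birkhoffSum_gt_le hA (measurableSet_spanningSets ν i)
    (measure_spanningSets_lt_top ν i).ne hε

theorem Ergodic.ae_tendsto_birkhoffAverage_indicator_one [SigmaFinite ν] (hf : Ergodic f ν)
    (hν : ν univ = ∞) {A : Set α} (hA : MeasurableSet A) (hAfin : ν A ≠ ∞) :
    ∀ᵐ x ∂ν, Tendsto (birkhoffAverage ℝ f (A.indicator (1 : α → ℝ)) · x) atTop (𝓝 0) := by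
  set L : α → ℝ≥0∞ := fun x =>
    limsup (fun n => ENNReal.ofReal (birkhoffAverage ℝ f (A.indicator 1) n x)) atTop
  have hbdd : Bornology.IsBounded (range (A.indicator (1 : α → ℝ))) :=
    (Set.toFinite {0, 1}).isBounded.subset
      (range_subset_iff.2 fun x => by by_cases hx : x ∈ A <;> simp [hx])
  have hL_meas : Measurable L := Measurable.limsup fun n => ENNReal.measurable_ofReal.comp <|
    (hf.measurable.birkhoffSum (measurable_one.indicator hA) n).const_smul (n : ℝ)⁻¹
  have hnull : ∀ ε > 0, ν {x | ENNReal.ofReal ε < L x} = 0 := by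
    intro ε hε
    set D := {x | ENNReal.ofReal ε < L x}
    have hD_sub : D ⊆ {x | ∃ n : ℕ, ε * n < birkhoffSum f (A.indicator 1) n x} := by
      intro x hx
      obtain ⟨n, hn⟩ := (frequently_lt_of_lt_limsup (f := atTop)
        (u := fun n => ENNReal.ofReal (birkhoffAverage ℝ f (A.indicator 1) n x))
        (by isBoundedDefault) hx).exists
      rw [ENNReal.ofReal_lt_ofReal_iff', birkhoffAverage_real_apply] at hn
      have hn0 : (0 : ℝ) < n := Nat.cast_pos.2 <| Nat.pos_of_ne_zero fun h0 => by
        simp [h0] at hn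
      exact ⟨n, (lt_div_iff₀ hn0).1 hn.1⟩
    have hD_fin : ν D ≠ ∞ := by
      refine ne_top_of_le_ne_top ?_ (measure_mono hD_sub)
      intro hE
      have := hf.ofReal_mul_measure_exists_birkhoffSum_gt_le hA hε
      rw [hE, ENNReal.mul_top (ENNReal.ofReal_pos.2 hε).ne', top_le_iff] at this
      exact hAfin this
    have hD_inv : f ⁻¹' D = D := by
      ext x
      simp only [D, mem_preimage, mem_ofPred_eq, L, limsup_ofReal_birkhoffAverage_apply hbdd]
    refine (hf.measure_self_or_compl_eq_zero (measurableSet_lt measurable_const hL_meas)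
      hD_inv).resolve_right fun hDc => hD_fin ?_
    have hsplit := measure_univ_le_add_compl (μ := ν) D
    rwa [hν, hDc, add_zero, top_le_iff] at hsplit
  have hae : ∀ᵐ x ∂ν, ∀ k : ℕ, L x ≤ ENNReal.ofReal (1 / (k + 1)) :=
    ae_all_iff.2 fun k => ae_iff.2 <| by simpa only [not_le] using hnull _ (by positivity)
  filter_upwards [hae] with x hx
  refine tendsto_zero_of_limsup_ofReal_le (fun n => ?_) fun ε hε => ?_
  · rw [birkhoffAverage_real_apply]
    exact div_nonneg (birkhoffSum_indicator_one_nonneg f A n x) n.cast_nonneg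
  · obtain ⟨k, hk⟩ := exists_nat_one_div_lt hε
    exact (hx k).trans (ENNReal.ofReal_le_ofReal hk.le)

end Birkhoff

theorem tendsto_birkhoffAverage_of_hasBasis {X : Type*} [TopologicalSpace X] {f : X → X}
    {x p : X} {ι : Sort*} {q : ι → Prop} {s : ι → Set X} (hs : (𝓝 p).HasBasis q s)
    (h : ∀ i, q i →
      Tendsto (birkhoffAverage ℝ f ((s i)ᶜ.indicator (1 : X → ℝ)) · x) atTop (𝓝 0))
    (φ : BoundedContinuousFunction X ℝ) :
    Tendsto (birkhoffAverage ℝ f φ · x) atTop (𝓝 (φ p)) := by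
  refine Metric.tendsto_nhds.2 fun ε hε => ?_
  obtain ⟨i, hi, hφ⟩ := hs.mem_iff.1
    (φ.continuous.continuousAt (Metric.ball_mem_nhds (φ p) (half_pos hε)))
  have hpt : ∀ y, dist (φ y) (φ p) ≤ ε / 2 + 2 * ‖φ‖ * (s i)ᶜ.indicator 1 y := by
    intro y
    by_cases hy : y ∈ s i
    · simpa [hy] using (hφ hy).le
    · simpa [hy] using add_le_add (half_pos hε).le (φ.dist_le_two_norm y p)
  have hlim : Tendsto (fun n => ε / 2 + 2 * ‖φ‖ * birkhoffAverage ℝ f ((s i)ᶜ.indicator 1) n x)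
      atTop (𝓝 (ε / 2)) := by
    simpa using ((h i hi).const_mul (2 * ‖φ‖)).const_add (ε / 2)
  filter_upwards [hlim.eventually (gt_mem_nhds (half_lt_self hε)), eventually_ne_atTop 0]
    with n hn hn0
  exact (dist_birkhoffAverage_le hpt hn0 x).trans_lt hn

theorem stmt0_general {X : Type*} [MetricSpace X] [MeasurableSpace X] [BorelSpace X]
    (m : Measure X)
    (f : X → X) (hf : Measurable f)
    (ν : Measure X) [SigmaFinite ν]
    (hinf : ν Set.univ = ⊤)
    (hinv : ∀ A : Set X, MeasurableSet A → ν (f ⁻¹' A) = ν A)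
    (herg : ∀ A : Set X, MeasurableSet A → f ⁻¹' A = A → ν A = 0 ∨ ν Aᶜ = 0)
    (hac : ν ≪ m)
    (p : X)
    (hp : ∀ O : Set X, IsOpen O → p ∈ O → ν Oᶜ < ⊤) :
    0 < m {x : X | ∀ φ : BoundedContinuousFunction X ℝ,
      Tendsto (fun n : ℕ => (∑ i ∈ Finset.range n, φ (f^[i] x)) / (n : ℝ))
        atTop (nhds (φ p))} := by
  have hergodic : Ergodic f ν :=
    { toMeasurePreserving :=
        ⟨hf, Measure.ext fun s hs => by rw [Measure.map_apply hf hs, hinv s hs]⟩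
      aeconst_set := fun s hs hfs => eventuallyConst_set'.2 <| by
        simpa only [ae_eq_empty, ae_eq_univ] using herg s hs hfs }
  have hballs : ∀ᵐ x ∂ν, ∀ k : ℕ, Tendsto
      (birkhoffAverage ℝ f ((Metric.ball p (1 / (k + 1)))ᶜ.indicator (1 : X → ℝ)) · x)
      atTop (𝓝 0) :=
    ae_all_iff.2 fun k => hergodic.ae_tendsto_birkhoffAverage_indicator_one hinf
      Metric.isOpen_ball.measurableSet.compl
      (hp _ Metric.isOpen_ball (Metric.mem_ball_self (by positivity))).ne
  have hgood : ∀ᵐ x ∂ν, ∀ φ : BoundedContinuousFunction X ℝ,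
      Tendsto (fun n : ℕ => (∑ i ∈ Finset.range n, φ (f^[i] x)) / (n : ℝ)) atTop (𝓝 (φ p)) :=
    hballs.mono fun x hx φ =>
      (tendsto_birkhoffAverage_of_hasBasis Metric.nhds_basis_ball_inv_nat_succ
        (fun k _ => hx k) φ).congr fun n => birkhoffAverage_real_apply n x
  have hgood_top : ν {x : X | ∀ φ : BoundedContinuousFunction X ℝ,
      Tendsto (fun n : ℕ => (∑ i ∈ Finset.range n, φ (f^[i] x)) / (n : ℝ))
        atTop (nhds (φ p))} = ∞ := by
    rw [measure_congr (ae_eq_univ.2 (mem_ae_iff.1 hgood)), hinf]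
  exact pos_iff_ne_zero.2 fun hm => by simpa [hgood_top] using hac hm

/-- For a measurable map `f` on a metric space with an f-invariant, ergodic,
conservative, σ-finite infinite measure `ν ≪ m`, such that some point `p` has cofinite mass
outside each of its neighborhoods, the set of points whose Birkhoff averages of every bounded
continuous function converge to its value at `p` has positive `m`-measure. -/
theorem stmt0 {X : Type*} [MetricSpace X] [MeasurableSpace X] [BorelSpace X]
    (m : Measure X) [IsProbabilityMeasure m]
    (f : X → X) (hf : Measurable f)
    (ν : Measure X) [SigmaFinite ν]
    (hinf : ν Set.univ = ⊤)
    (hinv : ∀ A : Set X, MeasurableSet A → ν (f ⁻¹' A) = ν A)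
    (herg : ∀ A : Set X, MeasurableSet A → f ⁻¹' A = A → ν A = 0 ∨ ν Aᶜ = 0)
    (hcons : Conservative f ν)
    (hac : ν ≪ m)
    (p : X)
    (hp : ∀ O : Set X, IsOpen O → p ∈ O → ν Oᶜ < ⊤) :
    0 < m {x : X | ∀ φ : BoundedContinuousFunction X ℝ,
      Tendsto (fun n : ℕ => (∑ i ∈ Finset.range n, φ (f^[i] x)) / (n : ℝ))
        atTop (nhds (φ p))} :=
  stmt0_general m f hf ν hinf hinv herg hac p hp
end

section
/- Fix α > 0 and let y_0 = 1, y_{n+1} = g(y_n) where g is the inverse of the left branch x ↦ x + 2^α x^{1+α} of the LSV map. Then there exist constants C > 0 and ε > 0 such that |y_n − (α 2^α n)^{−1/α}| ≤ C n^{−(1+ε)/α} for all n ≥ 1. -/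
/-!
Put `u_n = y_n^{-α}` and `a = α 2^α`. The defining relation `y_n = y_{n+1} (1 + 2^α y_{n+1}^α)`
becomes `u_n = u_{n+1} (1 + 2^α / u_{n+1})^{-α}`, and two tangent-line inequalities for the convex
function `x ↦ x^{-α}` give `u_n + a u_n / (u_n + b) ≤ u_{n+1} ≤ u_n + a` with `b = (α + 1) 2^α`.
Hence `u_n` grows linearly, `u_{n+1} - u_n = a + O(1/n)`, and summing, `|u_n - a n| = O(log n)`,
which is `O(√n)`. Both `u_n` and `a n` lie in some `[m n, ∞)`, where `x ↦ x^{-1/α}` is Lipschitz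
with constant `O(n^{-1/α-1})`; so `|y_n - (a n)^{-1/α}| = O(n^{-1/α-1/2})`, and `ε = α/2`.
-/

open Set Real

theorem one_add_mul_self_le_rpow_one_add_of_nonpos {s p : ℝ} (hs : -1 < s) (hp : p ≤ 0) :
    1 + p * s ≤ (1 + s) ^ p := by
  have hpos : 0 < 1 + s := by linarith
  have hlog : log (1 + s) ≤ s := by linarith [log_le_sub_one_of_pos hpos]
  rw [rpow_def_of_pos hpos]
  nlinarith [add_one_le_exp (log (1 + s) * p)]

theorem rpow_tangent_le_rpow_of_nonpos {p x y : ℝ} (hp : p ≤ 0) (hx : 0 < x) (hy : 0 < y) :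
    y ^ p + p * y ^ (p - 1) * (x - y) ≤ x ^ p := by
  have hB := one_add_mul_self_le_rpow_one_add_of_nonpos (s := x / y - 1)
    (by linarith [div_pos hx hy]) hp
  rw [add_sub_cancel, div_rpow hx.le hy.le] at hB
  have hyp : 0 < y ^ p := rpow_pos_of_pos hy p
  rw [rpow_sub_one hy.ne']
  have := mul_le_mul_of_nonneg_left hB hyp.le
  rw [mul_div_cancel₀ _ hyp.ne'] at this
  calc y ^ p + p * (y ^ p / y) * (x - y) = y ^ p * (1 + p * (x / y - 1)) := by
        field_simp
    _ ≤ x ^ p := this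

theorem abs_rpow_neg_sub_rpow_neg_le {β q x y : ℝ} (hβ : 0 ≤ β) (hq : 0 < q) (hx : q ≤ x)
    (hy : q ≤ y) : |x ^ (-β) - y ^ (-β)| ≤ β * q ^ (-β - 1) * |x - y| := by
  wlog hxy : x ≤ y generalizing x y
  · rw [abs_sub_comm, abs_sub_comm x]
    exact this hy hx (le_of_not_ge hxy)
  have hx0 : 0 < x := hq.trans_le hx
  have htan := rpow_tangent_le_rpow_of_nonpos (neg_nonpos.2 hβ) (hx0.trans_le hxy) hx0
  have hmono : y ^ (-β) ≤ x ^ (-β) := rpow_le_rpow_of_nonpos hx0 hxy (neg_nonpos.2 hβ)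
  have hq' : x ^ (-β - 1) ≤ q ^ (-β - 1) := rpow_le_rpow_of_nonpos hq hx (by linarith)
  rw [abs_of_nonneg (sub_nonneg.2 hmono), abs_sub_comm, abs_of_nonneg (sub_nonneg.2 hxy)]
  nlinarith [mul_le_mul_of_nonneg_right hq' (mul_nonneg hβ (sub_nonneg.2 hxy))]

section Step

variable {α c u v : ℝ}

theorem le_add_of_eq_mul_one_add_div_rpow (hα : 0 ≤ α) (hc : 0 ≤ c) (hv : 0 < v)
    (hu : u = v * (1 + c / v) ^ (-α)) : v ≤ u + α * c := by
  have hB := one_add_mul_self_le_rpow_one_add_of_nonpos (s := c / v)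
    (by linarith [div_nonneg hc hv.le]) (neg_nonpos.2 hα)
  have h := mul_le_mul_of_nonneg_left hB hv.le
  rw [← hu] at h
  have : v * (1 + -α * (c / v)) = v - α * c := by field_simp; ring
  linarith

theorem add_mul_div_le_of_eq_mul_one_add_div_rpow (hα : 0 ≤ α) (hc : 0 ≤ c) (hv : 0 < v)
    (hu : u = v * (1 + c / v) ^ (-α)) : u + α * c * u / (u + (α + 1) * c) ≤ v := by
  have hle := le_add_of_eq_mul_one_add_div_rpow hα hc hv hu
  have hu0 : 0 ≤ u := hu ▸ by positivity
  suffices u + α * c * u / (v + c) ≤ v by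
    have : α * c * u / (u + (α + 1) * c) ≤ α * c * u / (v + c) :=
      div_le_div_of_nonneg_left (by positivity) (by positivity) (by linarith)
    linarith
  have ht : 0 < 1 + c / v := by positivity
  -- the tangent line of `x ↦ x ^ (-α)` at `1 + c / v`, evaluated at `1`
  have hT := rpow_tangent_le_rpow_of_nonpos (neg_nonpos.2 hα) one_pos ht
  rw [one_rpow, rpow_sub_one ht.ne'] at hT
  have h := mul_le_mul_of_nonneg_left hT hv.le
  rw [hu]
  calc v * (1 + c / v) ^ (-α) + α * c * (v * (1 + c / v) ^ (-α)) / (v + c)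
      = v * ((1 + c / v) ^ (-α)
          + -α * ((1 + c / v) ^ (-α) / (1 + c / v)) * (1 - (1 + c / v))) := by
        field_simp
        ring
    _ ≤ v * 1 := h
    _ = v := mul_one v

end Step

section Sequence

open Finset

theorem sum_range_inv_succ_le_three_mul_rpow_half {n : ℕ} (hn : 1 ≤ n) :
    ∑ k ∈ range n, ((k : ℝ) + 1)⁻¹ ≤ 3 * (n : ℝ) ^ (1 / 2 : ℝ) := by
  have hH : ∑ k ∈ range n, ((k : ℝ) + 1)⁻¹ = harmonic n := by
    simp [harmonic, Rat.cast_sum]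
  have hlog := log_le_rpow_div (Nat.cast_nonneg n) (one_half_pos (α := ℝ))
  have hone : (1 : ℝ) ≤ (n : ℝ) ^ (1 / 2 : ℝ) :=
    one_le_rpow (by exact_mod_cast hn) (by norm_num)
  linarith [harmonic_le_one_add_log n]

variable {u d : ℕ → ℝ} {a b : ℝ}

theorem le_add_sum_of_succ_le_add (h : ∀ n, u (n + 1) ≤ u n + d n) (n : ℕ) :
    u n ≤ u 0 + ∑ k ∈ range n, d k := by
  have := sum_le_sum fun k (_ : k ∈ range n) ↦ sub_le_iff_le_add'.2 (h k)
  rw [sum_range_sub] at this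
  linarith

theorem add_sum_le_of_add_le_succ (h : ∀ n, u n + d n ≤ u (n + 1)) (n : ℕ) :
    u 0 + ∑ k ∈ range n, d k ≤ u n := by
  have := sum_le_sum fun k (_ : k ∈ range n) ↦ le_sub_iff_add_le'.2 (h k)
  rw [sum_range_sub] at this
  linarith

theorem exists_mul_succ_le (ha : 0 < a) (hb : 0 ≤ b) (hu1 : ∀ n, 1 ≤ u n)
    (hlow : ∀ n, u n + a * u n / (u n + b) ≤ u (n + 1)) :
    ∃ m > 0, ∀ n : ℕ, m * (n + 1) ≤ u n := by
  set m := min 1 (a / (1 + b))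
  have hm : 0 < m := lt_min one_pos (by positivity)
  have hstep : ∀ n, u n + m ≤ u (n + 1) := fun n ↦ by
    have : a / (1 + b) ≤ a * u n / (u n + b) := by
      have := hu1 n
      rw [div_le_div_iff₀ (by positivity) (by linarith)]
      nlinarith [mul_nonneg (mul_nonneg ha.le (sub_nonneg.2 this)) hb]
    linarith [hlow n, min_le_right 1 (a / (1 + b))]
  refine ⟨m, hm, fun n ↦ ?_⟩
  have := add_sum_le_of_add_le_succ hstep n
  simp only [sum_const, card_range, nsmul_eq_mul] at this
  nlinarith [hu1 0, min_le_left 1 (a / (1 + b))]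

theorem exists_abs_sub_mul_le_mul_rpow_half {m : ℝ} (ha : 0 < a) (hb : 0 ≤ b) (hm : 0 < m)
    (hlin : ∀ n : ℕ, m * (n + 1) ≤ u n) (hup : ∀ n, u (n + 1) ≤ u n + a)
    (hlow : ∀ n, u n + a * u n / (u n + b) ≤ u (n + 1)) :
    ∃ M > 0, ∀ n : ℕ, 1 ≤ n → |u n - a * n| ≤ M * (n : ℝ) ^ (1 / 2 : ℝ) := by
  have hupos (n : ℕ) : 0 < u n := by nlinarith [hlin n]
  set K := a * b / m
  have hK : 0 ≤ K := by positivity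
  have hstep (n : ℕ) : u n + (a - K * ((n : ℝ) + 1)⁻¹) ≤ u (n + 1) := by
    have hdefect : a * b / (u n + b) ≤ K * ((n : ℝ) + 1)⁻¹ := by
      rw [← div_eq_mul_inv, div_div, div_le_div_iff₀ (by linarith [hupos n]) (by positivity)]
      nlinarith [hlin n, hupos n, mul_nonneg ha.le hb]
    have : a * u n / (u n + b) = a - a * b / (u n + b) := by
      field_simp [show u n + b ≠ 0 by linarith [hupos n]]; ring
    linarith [hlow n]
  refine ⟨u 0 + 3 * K, by linarith [hupos 0], fun n hn ↦ ?_⟩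
  have hupper := le_add_sum_of_succ_le_add (d := fun _ ↦ a) hup n
  have hlower := add_sum_le_of_add_le_succ hstep n
  simp only [sum_const, card_range, nsmul_eq_mul, sum_sub_distrib, ← mul_sum] at hupper hlower
  have hH := sum_range_inv_succ_le_three_mul_rpow_half hn
  have hone : (1 : ℝ) ≤ (n : ℝ) ^ (1 / 2 : ℝ) := one_le_rpow (by exact_mod_cast hn) (by norm_num)
  rw [abs_le]
  constructor <;> nlinarith [hupos 0]

end Sequence

theorem abs_rpow_neg_sub_mul_rpow_neg_le {u : ℕ → ℝ} {a m M β : ℝ} (ha : 0 < a) (hm : 0 < m)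
    (hβ : 0 ≤ β) (hlin : ∀ n : ℕ, m * (n + 1) ≤ u n)
    (herr : ∀ n : ℕ, 1 ≤ n → |u n - a * n| ≤ M * (n : ℝ) ^ (1 / 2 : ℝ)) {n : ℕ} (hn : 1 ≤ n) :
    |u n ^ (-β) - (a * n) ^ (-β)| ≤ β * min m a ^ (-β - 1) * M * (n : ℝ) ^ (-β - 1 / 2) := by
  have hn0 : (0 : ℝ) < n := by exact_mod_cast hn
  have hmin : 0 < min m a := lt_min hm ha
  have hux : min m a * n ≤ u n := by
    nlinarith [hlin n, min_le_left m a]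
  have hax : min m a * n ≤ a * n := by
    nlinarith [min_le_right m a]
  have hpow : (min m a * n) ^ (-β - 1) * (n : ℝ) ^ (1 / 2 : ℝ) =
      min m a ^ (-β - 1) * (n : ℝ) ^ (-β - 1 / 2) := by
    rw [mul_rpow hmin.le hn0.le, mul_assoc, ← rpow_add hn0,
      show -β - 1 + 1 / 2 = -β - 1 / 2 by ring]
  calc |u n ^ (-β) - (a * n) ^ (-β)|
      ≤ β * (min m a * n) ^ (-β - 1) * |u n - a * n| :=
        abs_rpow_neg_sub_rpow_neg_le hβ (by positivity) hux hax
    _ ≤ β * (min m a * n) ^ (-β - 1) * (M * (n : ℝ) ^ (1 / 2 : ℝ)) := by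
        gcongr
        exact herr n hn
    _ = β * min m a ^ (-β - 1) * M * (n : ℝ) ^ (-β - 1 / 2) := by
        linear_combination β * M * hpow

theorem orbit_mem_Ioc {α c : ℝ} (hα : 0 ≤ α) {g : ℝ → ℝ}
    (hg : ∀ x ∈ Icc (0 : ℝ) 1, g x ∈ Icc (0 : ℝ) (1 / 2) ∧ g x + c * g x ^ (1 + α) = x)
    {y : ℕ → ℝ} (hy0 : y 0 = 1) (hy : ∀ n, y (n + 1) = g (y n)) (n : ℕ) : y n ∈ Ioc 0 1 := by
  induction n with
  | zero => simp [hy0]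
  | succ n ih =>
    obtain ⟨⟨hg0, hg1⟩, hgx⟩ := hg (y n) (Ioc_subset_Icc_self ih)
    rw [hy]
    refine ⟨hg0.lt_of_ne fun h ↦ ?_, by linarith⟩
    rw [← h, zero_rpow (by linarith)] at hgx
    linarith [ih.1]

theorem rpow_neg_add_mul_rpow_one_add {α c z : ℝ} (hc : 0 ≤ c) (hz : 0 < z) :
    (z + c * z ^ (1 + α)) ^ (-α) = z ^ (-α) * (1 + c / z ^ (-α)) ^ (-α) := by
  rw [rpow_add hz, rpow_one, rpow_neg hz.le, div_inv_eq_mul, ← rpow_neg hz.le,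
    ← mul_rpow hz.le (by positivity)]
  ring_nf

/-- Refined asymptotics of the backward orbit of `1` under the inverse left
branch of the LSV map: `|y_n − (α 2^α n)^{−1/α}| ≤ C n^{−(1+ε)/α}` for all `n ≥ 1`. -/
theorem stmt11 (α : ℝ) (hα : 0 < α) (g : ℝ → ℝ)
    (hg : ∀ x ∈ Icc (0 : ℝ) 1,
      g x ∈ Icc (0 : ℝ) (1 / 2) ∧ g x + 2 ^ α * (g x) ^ (1 + α) = x)
    (y : ℕ → ℝ) (hy0 : y 0 = 1) (hy : ∀ n, y (n + 1) = g (y n)) :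
    ∃ C > (0 : ℝ), ∃ ε > (0 : ℝ), ∀ n : ℕ, 1 ≤ n →
      |y n - (α * 2 ^ α * n) ^ (-(1 / α))| ≤ C * (n : ℝ) ^ (-(1 + ε) / α) := by
  set c : ℝ := 2 ^ α
  have hc : 0 < c := by positivity
  have hyI := orbit_mem_Ioc hα.le hg hy0 hy
  set u : ℕ → ℝ := fun n ↦ y n ^ (-α)
  have hu1 (n : ℕ) : 1 ≤ u n :=
    one_le_rpow_of_pos_of_le_one_of_nonpos (hyI n).1 (hyI n).2 (by linarith)
  have hrec (n : ℕ) : u n = u (n + 1) * (1 + c / u (n + 1)) ^ (-α) := by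
    rw [← rpow_neg_add_mul_rpow_one_add hc.le (hyI (n + 1)).1, hy,
      (hg _ (Ioc_subset_Icc_self (hyI n))).2]
  have hup (n : ℕ) : u (n + 1) ≤ u n + α * c :=
    le_add_of_eq_mul_one_add_div_rpow hα.le hc.le (one_pos.trans_le (hu1 _)) (hrec n)
  have hlow (n : ℕ) : u n + α * c * u n / (u n + (α + 1) * c) ≤ u (n + 1) :=
    add_mul_div_le_of_eq_mul_one_add_div_rpow hα.le hc.le (one_pos.trans_le (hu1 _)) (hrec n)
  obtain ⟨m, hm, hlin⟩ := exists_mul_succ_le (by positivity) (by positivity) hu1 hlow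
  obtain ⟨M, hM, herr⟩ :=
    exists_abs_sub_mul_le_mul_rpow_half (by positivity) (by positivity) hm hlin hup hlow
  refine ⟨1 / α * min m (α * c) ^ (-(1 / α) - 1) * M, by positivity, α / 2, by positivity,
    fun n hn ↦ ?_⟩
  have hyu : y n = u n ^ (-(1 / α)) := by
    rw [← rpow_mul (hyI n).1.le, neg_mul_neg, mul_one_div_cancel hα.ne', rpow_one]
  rw [hyu, show -(1 + α / 2) / α = -(1 / α) - 1 / 2 by field_simp; ring]
  exact abs_rpow_neg_sub_mul_rpow_neg_le (by positivity) hm (by positivity) hlin herr hn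
end

section
/- Let c: J → (0,∞) be continuous at α* ∈ J, v: J → (0,∞) with v(α) > 1 for α < α*, v → 1 as α → α*-, and suppose for each α < α* a nonnegative sequence (a_{α,k})_{k≥1} satisfies |a_{α,k} − c_α k^{−v(α)}| ≤ D k^{−v(α)−ε} for all k, with D, ε > 0 fixed. Then lim_{α→α*-} (v(α)−1) ∑_{k=1}^∞ a_{α,k} = c_{α*}. -/
/-!
Split `∑ₖ a_{α,k} = c_α ζ(v(α)) + E_α`. The hypothesis bounds `|E_α|` by `D ζ(v(α) + ε)`, hence
uniformly by `D ζ(1 + ε)`, so `(v(α) - 1) E_α → 0`, while `(v(α) - 1) ζ(v(α)) → 1` is the simple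
pole of `ζ` at `1` and `c_α → c_{α*}`.
-/

open Filter

/-- The Riemann zeta function on real arguments `s > 1`, as the series `∑ n^{-s}`. -/
noncomputable def realZeta (s : ℝ) : ℝ := ∑' n : ℕ+, (n : ℝ) ^ (-s)

open Topology

lemma summable_pnat_rpow_neg {s : ℝ} (hs : 1 < s) :
    Summable (fun k : ℕ+ => (k : ℝ) ^ (-s)) :=
  summable_pnat_iff_summable_nat.mpr (Real.summable_nat_rpow.mpr (neg_lt_neg hs))

lemma realZeta_eq_tsum_nat {s : ℝ} (hs : 0 < s) :
    realZeta s = ∑' n : ℕ, 1 / (n : ℝ) ^ s := by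
  rw [realZeta, ← tsum_pnat_eq_tsum_of_eq_zero (by simp [Real.zero_rpow hs.ne'])]
  simp [Real.rpow_neg]

lemma tendsto_sub_one_mul_realZeta :
    Tendsto (fun s => (s - 1) * realZeta s) (𝓝[>] 1) (𝓝 1) := by
  refine tendsto_sub_mul_tsum_nat_rpow.congr' ?_
  filter_upwards [self_mem_nhdsWithin] with s (hs : 1 < s)
  rw [realZeta_eq_tsum_nat (by linarith)]

lemma realZeta_le_of_le {s t : ℝ} (hs : 1 < s) (hst : s ≤ t) : realZeta t ≤ realZeta s :=
  (summable_pnat_rpow_neg (hs.trans_le hst)).tsum_le_tsum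
    (fun k => Real.rpow_le_rpow_of_exponent_le (by exact_mod_cast k.pos) (neg_le_neg hst))
    (summable_pnat_rpow_neg hs)

section PowerAsymptotics

variable {f : ℕ+ → ℝ} {C D s ε : ℝ}

lemma hasSum_mul_rpow_neg_sub (hsε : 1 < s + ε) :
    HasSum (fun k : ℕ+ => D * (k : ℝ) ^ (-s - ε)) (D * realZeta (s + ε)) := by
  simpa only [realZeta, neg_add'] using (summable_pnat_rpow_neg hsε).hasSum.mul_left D

lemma summable_of_abs_sub_mul_rpow_le (hs : 1 < s) (hε : 0 ≤ ε)
    (hf : ∀ k, |f k - C * (k : ℝ) ^ (-s)| ≤ D * (k : ℝ) ^ (-s - ε)) : Summable f := by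
  have herr : Summable (fun k => f k - C * (k : ℝ) ^ (-s)) :=
    .of_norm_bounded (hasSum_mul_rpow_neg_sub (by linarith)).summable hf
  simpa using herr.add ((summable_pnat_rpow_neg hs).mul_left C)

lemma abs_tsum_sub_mul_realZeta_le (hs : 1 < s) (hε : 0 < ε)
    (hf : ∀ k, |f k - C * (k : ℝ) ^ (-s)| ≤ D * (k : ℝ) ^ (-s - ε)) :
    |∑' k, f k - C * realZeta s| ≤ D * realZeta (1 + ε) := by
  have hD : 0 ≤ D := by simpa using (abs_nonneg _).trans (hf 1)
  rw [realZeta, ← tsum_mul_left, ← (summable_of_abs_sub_mul_rpow_le hs hε.le hf).tsum_sub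
    ((summable_pnat_rpow_neg hs).mul_left C)]
  calc |∑' k, (f k - C * (k : ℝ) ^ (-s))|
      ≤ D * realZeta (s + ε) :=
        tsum_of_norm_bounded (f := fun k => f k - C * (k : ℝ) ^ (-s))
          (hasSum_mul_rpow_neg_sub (by linarith)) hf
    _ ≤ D * realZeta (1 + ε) := by gcongr; exact realZeta_le_of_le (by linarith) (by linarith)

end PowerAsymptotics

theorem tendsto_sub_one_mul_tsum_of_abs_sub_mul_rpow_le {ι : Type*} {l : Filter ι}
    {v c : ι → ℝ} {a : ι → ℕ+ → ℝ} {c₀ D ε : ℝ} (hε : 0 < ε)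
    (hv : Tendsto v l (𝓝[>] 1)) (hc : Tendsto c l (𝓝 c₀))
    (ha : ∀ᶠ i in l, ∀ k, |a i k - c i * (k : ℝ) ^ (-v i)| ≤ D * (k : ℝ) ^ (-v i - ε)) :
    Tendsto (fun i => (v i - 1) * ∑' k, a i k) l (𝓝 c₀) := by
  have hv1 : ∀ᶠ i in l, 1 < v i := hv self_mem_nhdsWithin
  have hmain : Tendsto (fun i => c i * ((v i - 1) * realZeta (v i))) l (𝓝 c₀) := by
    simpa using hc.mul (tendsto_sub_one_mul_realZeta.comp hv)
  have hvsub : Tendsto (fun i => (v i - 1) * (D * realZeta (1 + ε))) l (𝓝 0) := by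
    simpa using ((tendsto_nhds_of_tendsto_nhdsWithin hv).sub_const 1).mul_const _
  have herr : Tendsto (fun i => (v i - 1) * (∑' k, a i k - c i * realZeta (v i))) l (𝓝 0) := by
    refine squeeze_zero_norm' ?_ hvsub
    filter_upwards [hv1, ha] with i hi hai
    rw [Real.norm_eq_abs, abs_mul, abs_of_pos (sub_pos.mpr hi)]
    exact mul_le_mul_of_nonneg_left (abs_tsum_sub_mul_realZeta_le hi hε hai) (by linarith)
  simpa using (hmain.add herr).congr fun i => by ring

theorem stmt14_general (J : Set ℝ) (αstar : ℝ)
    (c : ℝ → ℝ)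
    (hc : Tendsto c (nhdsWithin αstar (J ∩ Set.Iio αstar)) (nhds (c αstar)))
    (v : ℝ → ℝ)
    (hv1 : ∀ α ∈ J, α < αstar → 1 < v α)
    (hvlim : Tendsto v (nhdsWithin αstar (J ∩ Set.Iio αstar)) (nhds 1))
    (D ε : ℝ) (hε : 0 < ε)
    (a : ℝ → ℕ+ → ℝ)
    (ha : ∀ α ∈ J, α < αstar → ∀ k : ℕ+,
      |a α k - c α * (k : ℝ) ^ (-(v α))| ≤ D * (k : ℝ) ^ (-(v α) - ε)) :
    Tendsto (fun α => (v α - 1) * ∑' k, a α k)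
      (nhdsWithin αstar (J ∩ Set.Iio αstar)) (nhds (c αstar)) := by
  have hmem : ∀ᶠ α in nhdsWithin αstar (J ∩ Set.Iio αstar), α ∈ J ∩ Set.Iio αstar :=
    self_mem_nhdsWithin
  refine tendsto_sub_one_mul_tsum_of_abs_sub_mul_rpow_le hε ?_ hc
    (hmem.mono fun α hα => ha α hα.1 hα.2)
  exact tendsto_nhdsWithin_iff.mpr ⟨hvlim, hmem.mono fun α hα => hv1 α hα.1 hα.2⟩

/-- Abstract series version of the zeta asymptotics: if for each `α < α*`
the nonnegative sequence `a_{α,·}` satisfies `|a_{α,k} − c_α k^{−v(α)}| ≤ D k^{−v(α)−ε}`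
with `c` continuous at `α*`, `v(α) > 1` for `α < α*` and `v → 1` as `α → α*⁻`, then
`(v(α) − 1) ∑_k a_{α,k} → c_{α*}` as `α → α*⁻`. -/
theorem stmt14 (J : Set ℝ) (hJ : J.OrdConnected) (αstar : ℝ) (hmem : αstar ∈ J)
    (c : ℝ → ℝ) (hcpos : ∀ α ∈ J, 0 < c α)
    (hc : Tendsto c (nhdsWithin αstar (J ∩ Set.Iio αstar)) (nhds (c αstar)))
    (v : ℝ → ℝ) (hvpos : ∀ α ∈ J, 0 < v α)
    (hv1 : ∀ α ∈ J, α < αstar → 1 < v α)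
    (hvlim : Tendsto v (nhdsWithin αstar (J ∩ Set.Iio αstar)) (nhds 1))
    (D ε : ℝ) (hD : 0 < D) (hε : 0 < ε)
    (a : ℝ → ℕ+ → ℝ)
    (hapos : ∀ α ∈ J, α < αstar → ∀ k : ℕ+, 0 ≤ a α k)
    (ha : ∀ α ∈ J, α < αstar → ∀ k : ℕ+,
      |a α k - c α * (k : ℝ) ^ (-(v α))| ≤ D * (k : ℝ) ^ (-(v α) - ε)) :
    Tendsto (fun α => (v α - 1) * ∑' k, a α k)
      (nhdsWithin αstar (J ∩ Set.Iio αstar)) (nhds (c αstar)) :=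
  stmt14_general J αstar c hc v hv1 hvlim D ε hε a ha
end
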